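/- For every positive integer m, N^{1/m} · ∫₀¹ m·N·x^m·(1-x^m)^{N-1} dx tends to Γ(1/m)/m as N → ∞. Equivalently, the expectation of the minimum of N i.i.d. draws from the distribution on [0,1] with CDF x^m is asymptotic to Γ(1/m)/(m·N^{1/m}). -/
import Mathlib

open Filter Topology

/-- Real Beta integral with natural second parameter. -/
lemma betaReal_nat (s : ℝ) (hs : 0 < s) (n : ℕ) :
    ∫ u in (0:ℝ)..1, u ^ s * (1 - u) ^ n
      = (n.factorial : ℝ) / ∏ j ∈ Finset.range (n + 1), (s + 1 + j) := by
  have hre : 0 < Complex.re ((s : ℂ) + 1) := by simp; linarith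
  have h1 := Complex.betaIntegral_eval_nat_add_one_right hre n
  have h2 : Complex.betaIntegral ((s:ℂ) + 1) ((n:ℂ) + 1)
      = ((∫ u in (0:ℝ)..1, u ^ s * (1 - u) ^ n : ℝ) : ℂ) := by
    rw [Complex.betaIntegral, ← intervalIntegral.integral_ofReal]
    apply intervalIntegral.integral_congr
    intro x hx
    rw [Set.uIcc_of_le (by norm_num : (0:ℝ) ≤ 1)] at hx
    have hx0 : (0:ℝ) ≤ x := hx.1
    have hx1 : (0:ℝ) ≤ 1 - x := by linarith [hx.2]
    rw [add_sub_cancel_right, add_sub_cancel_right]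
    dsimp only
    rw [Complex.ofReal_mul, ← Complex.ofReal_cpow hx0]
    congr 1
    rw [← Real.rpow_natCast (1 - x) n, Complex.ofReal_cpow hx1]
    push_cast
    ring
  rw [h2] at h1
  rw [← Complex.ofReal_inj, h1]
  push_cast
  ring

/-- N^{1/m} · ∫₀¹ mN x^m (1-x^m)^{N-1} dx → Γ(1/m)/m as N → ∞. -/
theorem expectation_min_asymptotic (m : ℕ) (hm : 0 < m) :
    Tendsto
      (fun N : ℕ =>
        (N : ℝ) ^ ((1 : ℝ) / m) *
          ∫ x in (0:ℝ)..1, (m : ℝ) * N * x ^ m * (1 - x ^ m) ^ (N - 1))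
      atTop (𝓝 (Real.Gamma (1 / m) / m)) := by
  set s : ℝ := 1 / m with hs_def
  have hm' : (m : ℝ) ≠ 0 := Nat.cast_ne_zero.mpr hm.ne'
  have hs : 0 < s := by positivity
  have key : ∀ N : ℕ, 1 ≤ N →
      (N : ℝ) ^ s * ∫ x in (0:ℝ)..1, (m : ℝ) * N * x ^ m * (1 - x ^ m) ^ (N - 1)
        = s * Real.GammaSeq s N := by
    intro N hN
    obtain ⟨n, rfl⟩ : ∃ n, N = n + 1 := ⟨N - 1, (Nat.succ_pred_eq_of_pos hN).symm⟩
    simp only [Nat.add_sub_cancel]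
    push_cast
    -- substitution u = x^m
    have hsub : (∫ x in (0:ℝ)..1, (m : ℝ) * (n+1) * x ^ m * (1 - x ^ m) ^ n)
        = (n+1 : ℝ) * ∫ u in (0:ℝ)..1, u ^ s * (1 - u) ^ n := by
      have h := intervalIntegral.integral_comp_mul_deriv (a := (0:ℝ)) (b := 1)
        (f := fun x => x ^ m) (f' := fun x => (m:ℝ) * x ^ (m-1))
        (g := fun u => (n+1 : ℝ) * (u ^ s * (1 - u) ^ n))
        (fun x _ => by simpa using hasDerivAt_pow m x)
        (by fun_prop)
        (by
          apply Continuous.mul continuous_const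
          exact ((Real.continuous_rpow_const hs.le).mul (by fun_prop)))
      simp only [zero_pow hm.ne', one_pow] at h
      rw [← intervalIntegral.integral_const_mul, ← h]
      apply intervalIntegral.integral_congr
      intro x hx
      rw [Set.uIcc_of_le (by norm_num : (0:ℝ) ≤ 1)] at hx
      have hx0 : (0:ℝ) ≤ x := hx.1
      have hxm : ((x ^ m : ℝ)) ^ s = x := by
        rw [← Real.rpow_natCast x m, ← Real.rpow_mul hx0, hs_def,
          mul_one_div, div_self hm', Real.rpow_one]
      simp only [Function.comp]
      rw [hxm]
      have hxp : x * x ^ (m - 1) = x ^ m := by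
        conv_rhs => rw [← Nat.succ_pred_eq_of_pos hm]
        rw [pow_succ', Nat.pred_eq_sub_one]
      ring_nf
      rw [← hxp]
      ring
    rw [hsub, betaReal_nat s hs n]
    -- algebra with GammaSeq
    rw [Real.GammaSeq]
    have hprod : ∏ j ∈ Finset.range (n + 1 + 1), (s + j)
        = (∏ j ∈ Finset.range (n + 1), (s + 1 + j)) * s := by
      rw [Finset.prod_range_succ']
      congr 1
      · apply Finset.prod_congr rfl
        intro j _
        push_cast
        ring
      · simp
    rw [hprod]
    have hpos : (0:ℝ) < ∏ j ∈ Finset.range (n + 1), (s + 1 + j) := by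
      apply Finset.prod_pos
      intro j _
      positivity
    rw [Nat.factorial_succ]
    push_cast
    field_simp
  have hlim : Tendsto (fun N : ℕ => s * Real.GammaSeq s N) atTop
      (𝓝 (Real.Gamma (1/m) / m)) := by
    have := (Real.GammaSeq_tendsto_Gamma s).const_mul s
    have heq : Real.Gamma (1/m) / m = s * Real.Gamma s := by
      rw [hs_def]; ring
    rw [heq]
    exact this
  apply hlim.congr'
  filter_upwards [eventually_ge_atTop 1] with N hN
  exact (key N hN).symm
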